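/- arXiv:2010.05673 — 4 statements merged into one kernel-verified Lean document; each statement's English description precedes it below -/
import Mathlib

section
/- Let P be a transition kernel on finite S×A (each P(·|s,a) a probability distribution on S) satisfying the anchor-state assumption: P(·|s,a) = Σ_{k∈K} λ_k^{s,a} P(·|s_k,a_k) with λ_k^{s,a} ≥ 0 and Σ_{k∈K} λ_k^{s,a} = 1. Then for every function V : S → ℝ and every (s,a) ∈ S×A, Σ_{k∈K} λ_k^{s,a} √(Var_{s_k,a_k}(V)) ≤ √(Var_{s,a}(V)). -/
/-- A transition kernel: each row `P s a ·` is a probability distribution on `S`. -/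
def IsKernel {S A : Type*} [Fintype S] (P : S → A → S → ℝ) : Prop :=
  (∀ s a s', 0 ≤ P s a s') ∧ ∀ s a, ∑ s', P s a s' = 1

/-- Variance of `V` under the distribution `p`:
`Var_p(V) = Σ p(s')V(s')² − (Σ p(s')V(s'))²`. -/
noncomputable def VarDist {S : Type*} [Fintype S] (p : S → ℝ) (V : S → ℝ) : ℝ :=
  (∑ s', p s' * V s' ^ 2) - (∑ s', p s' * V s') ^ 2

/-!
Since `P(·|s,a)` is the mixture `Σ λ_k P(·|s_k,a_k)`, the law of total variance gives
`Var_{s,a}(V) = Σ λ_k Var_{s_k,a_k}(V) + (variance under λ of the anchor means of V)`,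
so `Σ λ_k Var_{s_k,a_k}(V) ≤ Var_{s,a}(V)`. Jensen's inequality for the concave square root
then gives `Σ λ_k √Var_{s_k,a_k}(V) ≤ √(Σ λ_k Var_{s_k,a_k}(V))`.
-/

open Finset

lemma varDist_nonneg {S : Type*} [Fintype S] {p : S → ℝ} (V : S → ℝ)
    (hp₀ : ∀ s, 0 ≤ p s) (hp₁ : ∑ s, p s = 1) : 0 ≤ VarDist p V := by
  have jensen := (Even.convexOn_pow (𝕜 := ℝ) even_two).map_sum_le (t := univ) (p := V)
    (fun s _ => hp₀ s) hp₁ (fun _ _ => Set.mem_univ _)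
  simp only [smul_eq_mul] at jensen
  exact sub_nonneg.mpr jensen

section Mixture

variable {S K : Type*} [Fintype S] [Fintype K] (w : K → ℝ) (q : K → S → ℝ)

lemma sum_mixture_mul (W : S → ℝ) :
    ∑ s, (∑ k, w k * q k s) * W s = ∑ k, w k * ∑ s, q k s * W s := by
  simp only [sum_mul, mul_sum, mul_assoc]
  exact sum_comm

lemma varDist_mixture (V : S → ℝ) :
    VarDist (fun s => ∑ k, w k * q k s) V =
      ∑ k, w k * VarDist (q k) V + VarDist w (fun k => ∑ s, q k s * V s) := by
  simp only [VarDist, sum_mixture_mul, mul_sub, sum_sub_distrib]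
  ring

lemma sum_mul_varDist_le_varDist_mixture (hw₀ : ∀ k, 0 ≤ w k) (hw₁ : ∑ k, w k = 1)
    (V : S → ℝ) :
    ∑ k, w k * VarDist (q k) V ≤ VarDist (fun s => ∑ k, w k * q k s) V := by
  rw [varDist_mixture w q]
  exact le_add_of_nonneg_right (varDist_nonneg _ hw₀ hw₁)

end Mixture

lemma sum_mul_sqrt_le_sqrt_sum_mul {K : Type*} [Fintype K] {w x : K → ℝ}
    (hw₀ : ∀ k, 0 ≤ w k) (hw₁ : ∑ k, w k = 1) (hx : ∀ k, 0 ≤ x k) :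
    ∑ k, w k * Real.sqrt (x k) ≤ Real.sqrt (∑ k, w k * x k) :=
  Real.strictConcaveOn_sqrt.concaveOn.le_map_sum (fun k _ => hw₀ k) hw₁ (fun k _ => hx k)

theorem stmt8 {S A K : Type*} [Fintype S] [Fintype A] [Fintype K]
    (P : S → A → S → ℝ) (hP : IsKernel P)
    (anchor : K → S × A) (lam : S → A → K → ℝ)
    (hnn : ∀ s a k, 0 ≤ lam s a k) (hsum : ∀ s a, ∑ k, lam s a k = 1)
    (hrep : ∀ s a s', P s a s' = ∑ k, lam s a k * P (anchor k).1 (anchor k).2 s')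
    (V : S → ℝ) (s : S) (a : A) :
    ∑ k, lam s a k * Real.sqrt (VarDist (P (anchor k).1 (anchor k).2) V) ≤
      Real.sqrt (VarDist (P s a) V) := by
  have hmix : P s a = fun s' => ∑ k, lam s a k * P (anchor k).1 (anchor k).2 s' :=
    funext (hrep s a)
  calc ∑ k, lam s a k * Real.sqrt (VarDist (P (anchor k).1 (anchor k).2) V)
      ≤ Real.sqrt (∑ k, lam s a k * VarDist (P (anchor k).1 (anchor k).2) V) :=
        sum_mul_sqrt_le_sqrt_sum_mul (hnn s a) (hsum s a)
          fun k => varDist_nonneg V (hP.1 _ _) (hP.2 _ _)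
    _ ≤ Real.sqrt (VarDist (P s a) V) := by
        rw [hmix]
        exact Real.sqrt_le_sqrt
          (sum_mul_varDist_le_varDist_mixture _ _ (hnn s a) (hsum s a) V)
end

section
/- Let M = (S, A, P, r, γ) be a discounted MDP with rewards r : S×A → [0,1] and let π : S → A be any policy with value function V^π in M. Then ‖(I − γP^π)^{−1} √(Var_P(V^π))‖_∞ ≤ √(2/(1−γ)³), where the square root is applied entrywise. -/
open Matrix

/-- The transition matrix on state-action pairs induced by a policy `π`:
`P^π((s,a),(s',a')) = P(s'|s,a)·1[a' = π s']`. -/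
noncomputable def Pmat {S A : Type*} [Fintype S] [Fintype A] [DecidableEq A]
    (P : S → A → S → ℝ) (π : S → A) : Matrix (S × A) (S × A) ℝ :=
  Matrix.of fun p q => if q.2 = π q.1 then P p.1 p.2 q.1 else 0

/-- The Q-function of policy `π`: `Q^π = (I − γP^π)⁻¹ r`. -/
noncomputable def Qpi {S A : Type*} [Fintype S] [Fintype A] [DecidableEq S] [DecidableEq A]
    (γ : ℝ) (P : S → A → S → ℝ) (r : S → A → ℝ) (π : S → A) : S × A → ℝ :=
  ((1 : Matrix (S × A) (S × A) ℝ) - γ • Pmat P π)⁻¹ *ᵥ fun p => r p.1 p.2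

/-- The optimal Q-function: componentwise maximum of `Q^π` over policies. -/
noncomputable def Qstar {S A : Type*} [Fintype S] [Fintype A] [DecidableEq S] [DecidableEq A]
    (γ : ℝ) (P : S → A → S → ℝ) (r : S → A → ℝ) : S × A → ℝ :=
  fun x => ⨆ π : S → A, Qpi γ P r π x


/-- The value function of policy `π`: `V^π(s) = Q^π(s, π s)`. -/
noncomputable def Vpi {S A : Type*} [Fintype S] [Fintype A] [DecidableEq S] [DecidableEq A]
    (γ : ℝ) (P : S → A → S → ℝ) (r : S → A → ℝ) (π : S → A) : S → ℝ :=
  fun s => Qpi γ P r π (s, π s)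

/-!
Write `B = 1 - γP^π`, `C = 1 - γ²P^π`, `w = Var_P(V^π)` and `K = (1 - γ)⁻¹`. The vector
`Y = C⁻¹ w` is the variance of the discounted return, and `γ²Y + (Q^π)²` its second moment; as the
return lies in `[0, K]`, a comparison argument gives `γ²Y + (Q^π)² ≤ K Q^π`, whence `Y ≤ K²/4`.
Since `C = (1 - γ) + γB`, `B⁻¹ w = (1 - γ) B⁻¹ Y + γ Y ≤ (1 + γ) K²/4`. Finally `B⁻¹` has
nonnegative entries and row sums `K`, so by Cauchy–Schwarz `(B⁻¹ √w)² ≤ K B⁻¹ w ≤ 2K³`.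
All order-theoretic facts about `B⁻¹` and `C⁻¹` come from the minimum principle for `1 - βM`
with `M` row-stochastic and `0 ≤ β < 1`.
-/
section Resolvent

variable {X : Type*} [Fintype X] [DecidableEq X] {M : Matrix X X ℝ} {β : ℝ}

lemma mulVec_mono_of_mem_rowStochastic (hM : M ∈ rowStochastic ℝ X) {v w : X → ℝ}
    (h : v ≤ w) : M *ᵥ v ≤ M *ᵥ w := by
  intro x
  have := nonneg_mulVec_of_mem_rowStochastic hM (x := w - v) (fun y => sub_nonneg.2 (h y)) x
  simpa [mulVec_sub] using this

lemma mulVec_const_of_mem_rowStochastic (hM : M ∈ rowStochastic ℝ X) (c : ℝ) :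
    M *ᵥ (fun _ => c) = fun _ => c := by
  funext x
  simp [mulVec, dotProduct, ← Finset.sum_mul, sum_row_of_mem_rowStochastic hM]

lemma one_sub_smul_mulVec_apply (v : X → ℝ) (x : X) :
    ((1 - β • M) *ᵥ v) x = v x - β * (M *ᵥ v) x := by
  simp [sub_mulVec, smul_mulVec]

/-- Minimum principle: at a minimum `x₀` of `u`, `(M *ᵥ u) x₀ ≥ u x₀`, so `(1 - β) u x₀ ≥ 0`. -/
lemma nonneg_of_one_sub_smul_mulVec_nonneg (hM : M ∈ rowStochastic ℝ X) (hβ0 : 0 ≤ β)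
    (hβ1 : β < 1) {u : X → ℝ} (hu : 0 ≤ (1 - β • M) *ᵥ u) : 0 ≤ u := by
  intro x
  have : Nonempty X := ⟨x⟩
  obtain ⟨x₀, hx₀⟩ := Finite.exists_min u
  have hMu : u x₀ ≤ (M *ᵥ u) x₀ := by
    simpa [mulVec_const_of_mem_rowStochastic hM] using
      mulVec_mono_of_mem_rowStochastic hM (v := fun _ => u x₀) hx₀ x₀
  have hx₀u := hu x₀
  rw [Pi.zero_apply, one_sub_smul_mulVec_apply] at hx₀u
  have : 0 ≤ u x₀ := by nlinarith [mul_le_mul_of_nonneg_left hMu hβ0]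
  exact this.trans (hx₀ x)

lemma le_of_one_sub_smul_mulVec_le (hM : M ∈ rowStochastic ℝ X) (hβ0 : 0 ≤ β) (hβ1 : β < 1)
    {u v : X → ℝ} (h : (1 - β • M) *ᵥ u ≤ (1 - β • M) *ᵥ v) : u ≤ v := by
  have := nonneg_of_one_sub_smul_mulVec_nonneg hM hβ0 hβ1 (u := v - u)
    (by rw [mulVec_sub]; exact sub_nonneg.2 h)
  exact sub_nonneg.1 this

lemma isUnit_det_one_sub_smul (hM : M ∈ rowStochastic ℝ X) (hβ0 : 0 ≤ β) (hβ1 : β < 1) :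
    IsUnit (1 - β • M).det := by
  rw [isUnit_iff_ne_zero, Ne, ← exists_mulVec_eq_zero_iff]
  rintro ⟨v, hv0, hv⟩
  have hle : ∀ u w : X → ℝ, (1 - β • M) *ᵥ u = (1 - β • M) *ᵥ w → u ≤ w :=
    fun u w h => le_of_one_sub_smul_mulVec_le hM hβ0 hβ1 h.le
  exact hv0 (le_antisymm (hle _ _ (by rw [hv, mulVec_zero]))
    (hle _ _ (by rw [hv, mulVec_zero])))

lemma one_sub_smul_mulVec_inv_mulVec (hM : M ∈ rowStochastic ℝ X) (hβ0 : 0 ≤ β) (hβ1 : β < 1)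
    (v : X → ℝ) : (1 - β • M) *ᵥ ((1 - β • M)⁻¹ *ᵥ v) = v := by
  rw [mulVec_mulVec, mul_nonsing_inv _ (isUnit_det_one_sub_smul hM hβ0 hβ1), one_mulVec]

lemma inv_one_sub_smul_mulVec_one_sub_smul_mulVec (hM : M ∈ rowStochastic ℝ X) (hβ0 : 0 ≤ β)
    (hβ1 : β < 1) (v : X → ℝ) : (1 - β • M)⁻¹ *ᵥ ((1 - β • M) *ᵥ v) = v := by
  rw [mulVec_mulVec, nonsing_inv_mul _ (isUnit_det_one_sub_smul hM hβ0 hβ1), one_mulVec]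

lemma inv_one_sub_smul_mulVec_mono (hM : M ∈ rowStochastic ℝ X) (hβ0 : 0 ≤ β) (hβ1 : β < 1)
    {v w : X → ℝ} (h : v ≤ w) : (1 - β • M)⁻¹ *ᵥ v ≤ (1 - β • M)⁻¹ *ᵥ w :=
  le_of_one_sub_smul_mulVec_le hM hβ0 hβ1 (by
    rwa [one_sub_smul_mulVec_inv_mulVec hM hβ0 hβ1, one_sub_smul_mulVec_inv_mulVec hM hβ0 hβ1])

lemma one_sub_smul_mulVec_const (hM : M ∈ rowStochastic ℝ X) (c : ℝ) :
    (1 - β • M) *ᵥ (fun _ => c) = fun _ => (1 - β) * c := by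
  funext x
  rw [one_sub_smul_mulVec_apply, mulVec_const_of_mem_rowStochastic hM]
  ring

lemma inv_one_sub_smul_mulVec_const (hM : M ∈ rowStochastic ℝ X) (hβ0 : 0 ≤ β) (hβ1 : β < 1)
    (c : ℝ) : (1 - β • M)⁻¹ *ᵥ (fun _ => c) = fun _ => c / (1 - β) := by
  have hB := one_sub_smul_mulVec_const (β := β) hM (c / (1 - β))
  rw [mul_div_cancel₀ _ (sub_pos.2 hβ1).ne'] at hB
  rw [← hB, inv_one_sub_smul_mulVec_one_sub_smul_mulVec hM hβ0 hβ1]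

lemma inv_one_sub_smul_nonneg (hM : M ∈ rowStochastic ℝ X) (hβ0 : 0 ≤ β) (hβ1 : β < 1)
    (x y : X) : 0 ≤ (1 - β • M)⁻¹ x y := by
  simpa using inv_one_sub_smul_mulVec_mono hM hβ0 hβ1 (v := 0) (w := Pi.single y 1)
    (Pi.single_nonneg.2 zero_le_one) x

lemma sum_inv_one_sub_smul (hM : M ∈ rowStochastic ℝ X) (hβ0 : 0 ≤ β) (hβ1 : β < 1) (x : X) :
    ∑ y, (1 - β • M)⁻¹ x y = (1 - β)⁻¹ := by
  simpa [mulVec, dotProduct] using congrFun (inv_one_sub_smul_mulVec_const hM hβ0 hβ1 1) x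

end Resolvent

lemma sq_mulVec_le_sum_mul_mulVec_sq {m n : Type*} [Fintype n] {N : Matrix m n ℝ}
    (hN : ∀ i j, 0 ≤ N i j) (f : n → ℝ) (i : m) :
    (N *ᵥ f) i ^ 2 ≤ (∑ j, N i j) * (N *ᵥ (f ^ 2)) i :=
  Finset.sum_sq_le_sum_mul_sum_of_sq_le_mul _ (fun j _ => hN i j)
    (fun j _ => mul_nonneg (hN i j) (sq_nonneg _))
    (fun j _ => (by rw [Pi.pow_apply]; ring : _ = _).le)

def rowVariance {X : Type*} [Fintype X] (M : Matrix X X ℝ) (Q : X → ℝ) : X → ℝ :=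
  M *ᵥ Q ^ 2 - (M *ᵥ Q) ^ 2

lemma rowVariance_nonneg {X : Type*} [Fintype X] [DecidableEq X] {M : Matrix X X ℝ}
    (hM : M ∈ rowStochastic ℝ X) (Q : X → ℝ) : 0 ≤ rowVariance M Q := by
  intro x
  have := sq_mulVec_le_sum_mul_mulVec_sq (N := M)
    (fun _ _ => nonneg_of_mem_rowStochastic hM) Q x
  rw [sum_row_of_mem_rowStochastic hM, one_mul] at this
  simpa [rowVariance] using this

section TotalVariance

variable {X : Type*} [Fintype X] [DecidableEq X] {M : Matrix X X ℝ} {γ : ℝ} {r Q : X → ℝ}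

lemma nonneg_and_le_of_one_sub_smul_mulVec_eq (hM : M ∈ rowStochastic ℝ X) (hγ0 : 0 ≤ γ)
    (hγ1 : γ < 1) (hr0 : 0 ≤ r) (hr1 : r ≤ 1) (hQ : (1 - γ • M) *ᵥ Q = r) :
    0 ≤ Q ∧ Q ≤ fun _ => (1 - γ)⁻¹ := by
  have hγ : 1 - γ ≠ 0 := (sub_pos.2 hγ1).ne'
  refine ⟨le_of_one_sub_smul_mulVec_le hM hγ0 hγ1 ?_, le_of_one_sub_smul_mulVec_le hM hγ0 hγ1 ?_⟩
  · rwa [mulVec_zero, hQ]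
  · rw [hQ, one_sub_smul_mulVec_const hM, mul_inv_cancel₀ hγ]
    exact hr1

lemma sq_smul_inv_mulVec_rowVariance_add_sq_le (hM : M ∈ rowStochastic ℝ X) (hγ0 : 0 ≤ γ)
    (hγ1 : γ < 1) (hr0 : 0 ≤ r) (hr1 : r ≤ 1) (hQ : (1 - γ • M) *ᵥ Q = r) :
    γ ^ 2 • ((1 - γ ^ 2 • M)⁻¹ *ᵥ rowVariance M Q) + Q ^ 2 ≤ (1 - γ)⁻¹ • Q := by
  have hγ2 : γ ^ 2 < 1 := by nlinarith
  obtain ⟨hQ0, hQK⟩ := nonneg_and_le_of_one_sub_smul_mulVec_eq hM hγ0 hγ1 hr0 hr1 hQ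
  set K := (1 - γ)⁻¹
  have hK : K = 1 + γ * K := by
    simp only [K]
    field_simp [(sub_pos.2 hγ1).ne']
    ring
  have ht0 := mulVec_mono_of_mem_rowStochastic hM hQ0
  have htK := mulVec_mono_of_mem_rowStochastic hM hQK
  rw [mulVec_zero] at ht0
  rw [mulVec_const_of_mem_rowStochastic hM] at htK
  apply le_of_one_sub_smul_mulVec_le hM (sq_nonneg γ) hγ2
  rw [mulVec_add, mulVec_smul, one_sub_smul_mulVec_inv_mulVec hM (sq_nonneg γ) hγ2, mulVec_smul]
  intro x
  have hQx : Q x = r x + γ * (M *ᵥ Q) x := by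
    have := congrFun hQ x
    rw [one_sub_smul_mulVec_apply] at this
    linarith
  have hrx0 := hr0 x
  have hrx1 := hr1 x
  have htx0 := ht0 x
  have htxK := htK x
  simp only [Pi.add_apply, Pi.smul_apply, smul_eq_mul, one_sub_smul_mulVec_apply, rowVariance,
    Pi.sub_apply, Pi.pow_apply, Pi.one_apply, Pi.zero_apply] at *
  rw [hQx]
  -- `Kr + γt - (r² + 2γrt) = r(1 - r) + γr(K - t) + γt(1 - r)`, using `K = 1 + γK`
  set t := (M *ᵥ Q) x
  have hKr : K * r x = r x + γ * K * r x := by linear_combination r x * hK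
  have hKt : K * (γ * t - γ ^ 2 * t) = γ * t := by linear_combination (γ * t) * hK
  nlinarith [mul_nonneg hrx0 (sub_nonneg.2 hrx1),
    mul_nonneg (mul_nonneg hγ0 hrx0) (sub_nonneg.2 htxK),
    mul_nonneg (mul_nonneg hγ0 htx0) (sub_nonneg.2 hrx1)]

lemma inv_one_sub_sq_smul_mulVec_rowVariance_le (hM : M ∈ rowStochastic ℝ X) (hγ0 : 0 ≤ γ)
    (hγ1 : γ < 1) (hr0 : 0 ≤ r) (hr1 : r ≤ 1) (hQ : (1 - γ • M) *ᵥ Q = r) :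
    (1 - γ ^ 2 • M)⁻¹ *ᵥ rowVariance M Q ≤ fun _ => (1 - γ)⁻¹ ^ 2 / 4 := by
  have hγ2 : γ ^ 2 < 1 := by nlinarith
  have hCY := one_sub_smul_mulVec_inv_mulVec hM (sq_nonneg γ) hγ2 (rowVariance M Q)
  have hmoment := mulVec_mono_of_mem_rowStochastic hM
    (sq_smul_inv_mulVec_rowVariance_add_sq_le hM hγ0 hγ1 hr0 hr1 hQ)
  set K := (1 - γ)⁻¹
  set Y := (1 - γ ^ 2 • M)⁻¹ *ᵥ rowVariance M Q
  intro x
  have hYx : Y x = (M *ᵥ (γ ^ 2 • Y + Q ^ 2)) x - (M *ᵥ Q) x ^ 2 := by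
    have hCYx := congrFun hCY x
    rw [one_sub_smul_mulVec_apply] at hCYx
    simp only [rowVariance, Pi.sub_apply, Pi.pow_apply] at hCYx
    simp only [mulVec_add, mulVec_smul, Pi.add_apply, Pi.smul_apply, smul_eq_mul]
    linarith
  have := hmoment x
  simp only [mulVec_smul, Pi.smul_apply, smul_eq_mul] at this
  rw [hYx]
  nlinarith [sq_nonneg (K - 2 * (M *ᵥ Q) x)]

lemma inv_one_sub_smul_mulVec_rowVariance_le (hM : M ∈ rowStochastic ℝ X) (hγ0 : 0 ≤ γ)
    (hγ1 : γ < 1) (hr0 : 0 ≤ r) (hr1 : r ≤ 1) (hQ : (1 - γ • M) *ᵥ Q = r) :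
    (1 - γ • M)⁻¹ *ᵥ rowVariance M Q ≤ fun _ => (1 + γ) * (1 - γ)⁻¹ ^ 2 / 4 := by
  have hγ2 : γ ^ 2 < 1 := by nlinarith
  set Y := (1 - γ ^ 2 • M)⁻¹ *ᵥ rowVariance M Q
  have hYK := inv_one_sub_sq_smul_mulVec_rowVariance_le hM hγ0 hγ1 hr0 hr1 hQ
  have hBY := inv_one_sub_smul_mulVec_mono hM hγ0 hγ1 hYK
  rw [inv_one_sub_smul_mulVec_const hM hγ0 hγ1] at hBY
  have hsplit : (1 - γ • M)⁻¹ *ᵥ rowVariance M Q = (1 - γ) • ((1 - γ • M)⁻¹ *ᵥ Y) + γ • Y := by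
    have hCY : (1 - γ ^ 2 • M) *ᵥ Y = rowVariance M Q :=
      one_sub_smul_mulVec_inv_mulVec hM (sq_nonneg γ) hγ2 _
    have hC : (1 - γ ^ 2 • M) = (1 - γ) • 1 + γ • (1 - γ • M) := by
      rw [smul_sub, smul_smul, ← sq]; module
    rw [← hCY, hC, add_mulVec, smul_mulVec, smul_mulVec, one_mulVec, mulVec_add, mulVec_smul,
      mulVec_smul, inv_one_sub_smul_mulVec_one_sub_smul_mulVec hM hγ0 hγ1]
  intro x
  rw [hsplit]
  have h1 := hBY x
  have h2 := hYK x
  simp only [Pi.add_apply, Pi.smul_apply, smul_eq_mul] at *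
  have hγ : 1 - γ ≠ 0 := (sub_pos.2 hγ1).ne'
  calc (1 - γ) * ((1 - γ • M)⁻¹ *ᵥ Y) x + γ * Y x
      ≤ (1 - γ) * ((1 - γ)⁻¹ ^ 2 / 4 / (1 - γ)) + γ * ((1 - γ)⁻¹ ^ 2 / 4) := by
        gcongr
    _ = (1 + γ) * (1 - γ)⁻¹ ^ 2 / 4 := by field_simp

theorem norm_inv_one_sub_smul_mulVec_sqrt_rowVariance_le (hM : M ∈ rowStochastic ℝ X)
    (hγ0 : 0 ≤ γ) (hγ1 : γ < 1) (hr0 : 0 ≤ r) (hr1 : r ≤ 1) (hQ : (1 - γ • M) *ᵥ Q = r) :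
    ‖(1 - γ • M)⁻¹ *ᵥ fun x => √(rowVariance M Q x)‖ ≤ √(2 / (1 - γ) ^ 3) := by
  have hσ0 : (0 : X → ℝ) ≤ fun x => √(rowVariance M Q x) := fun x => Real.sqrt_nonneg _
  have hσsq : (fun x => √(rowVariance M Q x)) ^ 2 = rowVariance M Q := by
    funext x; exact Real.sq_sqrt (rowVariance_nonneg hM Q x)
  have hvar := inv_one_sub_smul_mulVec_rowVariance_le hM hγ0 hγ1 hr0 hr1 hQ
  rw [pi_norm_le_iff_of_nonneg (Real.sqrt_nonneg _)]
  intro x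
  have hu0 := inv_one_sub_smul_mulVec_mono hM hγ0 hγ1 hσ0 x
  rw [mulVec_zero, Pi.zero_apply] at hu0
  rw [Real.norm_eq_abs, abs_of_nonneg hu0]
  apply Real.le_sqrt_of_sq_le
  have hγ : 0 < 1 - γ := sub_pos.2 hγ1
  calc ((1 - γ • M)⁻¹ *ᵥ fun x => √(rowVariance M Q x)) x ^ 2
      ≤ (1 - γ)⁻¹ * ((1 - γ • M)⁻¹ *ᵥ rowVariance M Q) x := by
        have := sq_mulVec_le_sum_mul_mulVec_sq (inv_one_sub_smul_nonneg hM hγ0 hγ1)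
          (fun x => √(rowVariance M Q x)) x
        rwa [hσsq, sum_inv_one_sub_smul hM hγ0 hγ1] at this
    _ ≤ (1 - γ)⁻¹ * ((1 + γ) * (1 - γ)⁻¹ ^ 2 / 4) := by gcongr; exact hvar x
    _ ≤ 2 / (1 - γ) ^ 3 := by
        rw [div_eq_mul_inv _ ((1 - γ) ^ 3), ← inv_pow]
        nlinarith [pow_pos (inv_pos.2 hγ) 3]

end TotalVariance

section MDP

variable {S A : Type*} [Fintype S] [Fintype A] [DecidableEq A]

lemma Pmat_mulVec_apply (P : S → A → S → ℝ) (π : S → A) (f : S × A → ℝ) (x : S × A) :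
    (Pmat P π *ᵥ f) x = ∑ s', P x.1 x.2 s' * f (s', π s') := by
  simp [mulVec, dotProduct, Pmat, Fintype.sum_prod_type, ite_mul]

lemma Pmat_mem_rowStochastic [DecidableEq S] {P : S → A → S → ℝ} (hP : IsKernel P) (π : S → A) :
    Pmat P π ∈ rowStochastic ℝ (S × A) := by
  refine mem_rowStochastic.2 ⟨fun x y => ?_, funext fun x => ?_⟩
  · simp only [Pmat, of_apply]
    split_ifs
    exacts [hP.1 _ _ _, le_rfl]
  · simp [Pmat_mulVec_apply, hP.2]

lemma VarDist_Vpi_eq_rowVariance [DecidableEq S] (γ : ℝ) (P : S → A → S → ℝ) (r : S → A → ℝ)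
    (π : S → A) (x : S × A) :
    VarDist (P x.1 x.2) (Vpi γ P r π) = rowVariance (Pmat P π) (Qpi γ P r π) x := by
  simp [VarDist, Vpi, rowVariance, Pmat_mulVec_apply]

end MDP

theorem stmt9_general {S A : Type*} [Fintype S] [Fintype A] [DecidableEq S] [DecidableEq A]
    (P : S → A → S → ℝ) (r : S → A → ℝ) (γ : ℝ)
    (hP : IsKernel P) (hr : ∀ s a, 0 ≤ r s a ∧ r s a ≤ 1) (hγ0 : 0 < γ) (hγ1 : γ < 1)
    (π : S → A) :
    ‖((1 : Matrix (S × A) (S × A) ℝ) - γ • Pmat P π)⁻¹ *ᵥ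
        fun x : S × A => Real.sqrt (VarDist (P x.1 x.2) (Vpi γ P r π))‖ ≤
      Real.sqrt (2 / (1 - γ) ^ 3) := by
  have hM := Pmat_mem_rowStochastic hP π
  simp only [VarDist_Vpi_eq_rowVariance]
  exact norm_inv_one_sub_smul_mulVec_sqrt_rowVariance_le hM hγ0.le hγ1
    (fun x => (hr x.1 x.2).1) (fun x => (hr x.1 x.2).2)
    (one_sub_smul_mulVec_inv_mulVec hM hγ0.le hγ1 _)

theorem stmt9 {S A : Type*} [Fintype S] [Fintype A] [DecidableEq S] [DecidableEq A]
    [Nonempty S] [Nonempty A]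
    (P : S → A → S → ℝ) (r : S → A → ℝ) (γ : ℝ)
    (hP : IsKernel P) (hr : ∀ s a, 0 ≤ r s a ∧ r s a ≤ 1) (hγ0 : 0 < γ) (hγ1 : γ < 1)
    (π : S → A) :
    ‖((1 : Matrix (S × A) (S × A) ℝ) - γ • Pmat P π)⁻¹ *ᵥ
        fun x : S × A => Real.sqrt (VarDist (P x.1 x.2) (Vpi γ P r π))‖ ≤
      Real.sqrt (2 / (1 - γ) ^ 3) :=
  stmt9_general P r γ hP hr hγ0 hγ1 π
end

section
/- Let G = (S_1, S_2, A, P, r, γ) be a two-player turn-based zero-sum stochastic game and let Ĝ = (S_1, S_2, A, P̂, r, γ) be another such game with the same S_1, S_2, A, r, γ and kernel P̂. Let π* = (π_1*, π_2*) be a Nash equilibrium of G with Q* = Q^{π*}, let ĉ_1 and ĉ_2 denote counter (best-response) policies computed in Ĝ, and let π̂ = (π̂_1, π̂_2) satisfy |Q̂^{π̂} − Q̂*| ≤ ε_PS componentwise, where Q̂* is the Nash equilibrium Q-function of Ĝ. Then componentwise: −(‖Q^{ĉ_1(π_2*), π_2*} − Q̂^{ĉ_1(π_2*), π_2*}‖_∞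 + ‖Q^{π̂} − Q̂^{π̂}‖_∞ + ε_PS) ≤ Q* − Q^{π̂} ≤ ‖Q^{π_1*, ĉ_2(π_1*)} − Q̂^{π_1*, ĉ_2(π_1*)}‖_∞ + ‖Q^{π̂} − Q̂^{π̂}‖_∞ + ε_PS. -/
open Matrix

/-!
Both `Q^π` are fixed points of their Bellman equations, so a pointwise comparison of value
functions propagates to the Q-functions: `V^π ≤ V^ρ` gives `Q^π ≤ Q^ρ`. Applied to the Nash and
best-response inequalities this yields, in `G` and in `Ĝ`,
`Q^{ĉ₁(π₂*),π₂*} ≤ Q* ≤ Q^{π₁*,ĉ₂(π₁*)}` and `Q̂^{π₁*,ĉ₂(π₁*)} ≤ Q̂* ≤ Q̂^{ĉ₁(π₂*),π₂*}`.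
Passing between `G` and `Ĝ` at the policies `(π₁*, ĉ₂(π₁*))`, `(ĉ₁(π₂*), π₂*)` and `π̂` costs the
sup-norm of the corresponding Q-differences, and `Q̂*` is within `ε_PS` of `Q̂^{π̂}`.
-/

section Bellman

variable {S A : Type*} [Fintype S] [Fintype A] [DecidableEq A] {P : S → A → S → ℝ}

lemma Pmat_nonneg (hP : IsKernel P) (π : S → A) (p q : S × A) : 0 ≤ Pmat P π p q := by
  rw [Pmat, of_apply]
  split_ifs
  exacts [hP.1 _ _ _, le_rfl]

lemma sum_Pmat_mul (π : S → A) (p : S × A) (f : S × A → ℝ) :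
    ∑ q, Pmat P π p q * f q = ∑ s', P p.1 p.2 s' * f (s', π s') := by
  simp [Pmat, Fintype.sum_prod_type, ite_mul]

lemma sum_Pmat (hP : IsKernel P) (π : S → A) (p : S × A) : ∑ q, Pmat P π p q = 1 := by
  simpa using (sum_Pmat_mul π p fun _ => 1).trans (by simpa using hP.2 p.1 p.2)

lemma Pmat_apply_le_one (hP : IsKernel P) (π : S → A) (p q : S × A) : Pmat P π p q ≤ 1 :=
  sum_Pmat hP π p ▸ Finset.single_le_sum (fun q _ => Pmat_nonneg hP π p q) (Finset.mem_univ q)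

variable [DecidableEq S]

/-- `1 - γ • P^π` is strictly diagonally dominant: row `k` has off-diagonal mass
`γ (1 - P^π k k) < 1 - γ P^π k k`. -/
lemma isUnit_det_one_sub_smul_Pmat {γ : ℝ} (hγ0 : 0 ≤ γ) (hγ1 : γ < 1) (hP : IsKernel P)
    (π : S → A) : IsUnit ((1 : Matrix (S × A) (S × A) ℝ) - γ • Pmat P π).det := by
  refine isUnit_iff_ne_zero.mpr (det_ne_zero_of_sum_row_lt_diag fun k => ?_)
  have hoff : ∀ j ∈ Finset.univ.erase k,
      ‖((1 : Matrix (S × A) (S × A) ℝ) - γ • Pmat P π) k j‖ = γ * Pmat P π k j := by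
    intro j hj
    rw [Matrix.sub_apply, one_apply_ne (Finset.ne_of_mem_erase hj).symm, Matrix.smul_apply,
      smul_eq_mul, zero_sub, norm_neg, Real.norm_of_nonneg (mul_nonneg hγ0 (Pmat_nonneg hP π k j))]
  have hkk := Pmat_apply_le_one hP π k k
  rw [Finset.sum_congr rfl hoff, ← Finset.mul_sum, Finset.sum_erase_eq_sub (Finset.mem_univ k),
    sum_Pmat hP π k, Matrix.sub_apply, one_apply_eq, Matrix.smul_apply, smul_eq_mul,
    Real.norm_of_nonneg (by nlinarith)]
  nlinarith [Pmat_nonneg hP π k k]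

lemma Qpi_eq_add_sum_mul_Vpi {γ : ℝ} (hγ0 : 0 ≤ γ) (hγ1 : γ < 1) (hP : IsKernel P)
    (r : S → A → ℝ) (π : S → A) (x : S × A) :
    Qpi γ P r π x = r x.1 x.2 + γ * ∑ s', P x.1 x.2 s' * Vpi γ P r π s' := by
  have hfix : ((1 : Matrix (S × A) (S × A) ℝ) - γ • Pmat P π) *ᵥ Qpi γ P r π =
      fun p => r p.1 p.2 := by
    rw [Qpi, mulVec_mulVec, mul_nonsing_inv _ (isUnit_det_one_sub_smul_Pmat hγ0 hγ1 hP π),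
      one_mulVec]
  have hx := congrFun hfix x
  rw [sub_mulVec, one_mulVec, smul_mulVec, Pi.sub_apply, Pi.smul_apply, smul_eq_mul, mulVec,
    dotProduct, sum_Pmat_mul] at hx
  rw [← hx]
  simp only [Vpi]
  ring

lemma Qpi_le_Qpi_of_Vpi_le {γ : ℝ} (hγ0 : 0 ≤ γ) (hγ1 : γ < 1) (hP : IsKernel P)
    (r : S → A → ℝ) {π ρ : S → A} (h : ∀ s, Vpi γ P r π s ≤ Vpi γ P r ρ s) (x : S × A) :
    Qpi γ P r π x ≤ Qpi γ P r ρ x := by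
  rw [Qpi_eq_add_sum_mul_Vpi hγ0 hγ1 hP, Qpi_eq_add_sum_mul_Vpi hγ0 hγ1 hP]
  gcongr with s' _
  exacts [hP.1 _ _ _, h s']

end Bellman

lemma abs_sub_apply_le_norm_sub {ι : Type*} [Fintype ι] (f g : ι → ℝ) (x : ι) :
    |f x - g x| ≤ ‖f - g‖ := by
  simpa only [Real.norm_eq_abs, Pi.sub_apply] using norm_le_pi_norm (f - g) x

theorem stmt17_general {S1 S2 A : Type*} [Fintype S1] [Fintype S2] [Fintype A]
    [DecidableEq S1] [DecidableEq S2] [DecidableEq A]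
    (P Phat : (S1 ⊕ S2) → A → (S1 ⊕ S2) → ℝ) (r : (S1 ⊕ S2) → A → ℝ) (γ : ℝ)
    (hP : IsKernel P) (hPhat : IsKernel Phat)
    (hγ0 : 0 < γ) (hγ1 : γ < 1)
    -- a Nash equilibrium `π* = (π1s, π2s)` of the true game `G`
    (π1s : S1 → A) (π2s : S2 → A)
    (hNash1 : ∀ (π1 : S1 → A) (s : S1 ⊕ S2),
        Vpi γ P r (Sum.elim π1 π2s) s ≤ Vpi γ P r (Sum.elim π1s π2s) s)
    (hNash2 : ∀ (π2 : S2 → A) (s : S1 ⊕ S2),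
        Vpi γ P r (Sum.elim π1s π2s) s ≤ Vpi γ P r (Sum.elim π1s π2) s)
    -- counter (best-response) policies computed in the empirical game `Ĝ`
    (c1hat : (S2 → A) → (S1 → A)) (c2hat : (S1 → A) → (S2 → A))
    (hc1 : ∀ (π2 : S2 → A) (π1 : S1 → A) (s : S1 ⊕ S2),
        Vpi γ Phat r (Sum.elim π1 π2) s ≤ Vpi γ Phat r (Sum.elim (c1hat π2) π2) s)
    (hc2 : ∀ (π1 : S1 → A) (π2 : S2 → A) (s : S1 ⊕ S2),
        Vpi γ Phat r (Sum.elim π1 (c2hat π1)) s ≤ Vpi γ Phat r (Sum.elim π1 π2) s)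
    -- a Nash equilibrium `π̂* = (π1hs, π2hs)` of `Ĝ`, whose Q-function is `Q̂*`
    (π1hs : S1 → A) (π2hs : S2 → A)
    (hNash1h : ∀ (π1 : S1 → A) (s : S1 ⊕ S2),
        Vpi γ Phat r (Sum.elim π1 π2hs) s ≤ Vpi γ Phat r (Sum.elim π1hs π2hs) s)
    (hNash2h : ∀ (π2 : S2 → A) (s : S1 ⊕ S2),
        Vpi γ Phat r (Sum.elim π1hs π2hs) s ≤ Vpi γ Phat r (Sum.elim π1hs π2) s)
    -- a policy pair `π̂` with `|Q̂^{π̂} − Q̂*| ≤ ε_PS` componentwise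
    (π1h : S1 → A) (π2h : S2 → A) (εPS : ℝ)
    (hPS : ∀ x : (S1 ⊕ S2) × A,
        |Qpi γ Phat r (Sum.elim π1h π2h) x - Qpi γ Phat r (Sum.elim π1hs π2hs) x| ≤ εPS)
    (x : (S1 ⊕ S2) × A) :
    -(‖Qpi γ P r (Sum.elim (c1hat π2s) π2s) - Qpi γ Phat r (Sum.elim (c1hat π2s) π2s)‖ +
        ‖Qpi γ P r (Sum.elim π1h π2h) - Qpi γ Phat r (Sum.elim π1h π2h)‖ + εPS) ≤
      Qpi γ P r (Sum.elim π1s π2s) x - Qpi γ P r (Sum.elim π1h π2h) x ∧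
    Qpi γ P r (Sum.elim π1s π2s) x - Qpi γ P r (Sum.elim π1h π2h) x ≤
      ‖Qpi γ P r (Sum.elim π1s (c2hat π1s)) - Qpi γ Phat r (Sum.elim π1s (c2hat π1s))‖ +
        ‖Qpi γ P r (Sum.elim π1h π2h) - Qpi γ Phat r (Sum.elim π1h π2h)‖ + εPS := by
  have hmodelErr := fun π : (S1 ⊕ S2) → A =>
    abs_le.mp (abs_sub_apply_le_norm_sub (Qpi γ P r π) (Qpi γ Phat r π) x)
  have hc1Err := hmodelErr (Sum.elim (c1hat π2s) π2s)
  have hc2Err := hmodelErr (Sum.elim π1s (c2hat π1s))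
  have hπhErr := hmodelErr (Sum.elim π1h π2h)
  have hε := abs_le.mp (hPS x)
  constructor
  · have := Qpi_le_Qpi_of_Vpi_le hγ0.le hγ1 hP r (hNash1 (c1hat π2s)) x
    have := Qpi_le_Qpi_of_Vpi_le hγ0.le hγ1 hPhat r (hNash2h π2s) x
    have := Qpi_le_Qpi_of_Vpi_le hγ0.le hγ1 hPhat r (hc1 π2s π1hs) x
    linarith
  · have := Qpi_le_Qpi_of_Vpi_le hγ0.le hγ1 hP r (hNash2 (c2hat π1s)) x
    have := Qpi_le_Qpi_of_Vpi_le hγ0.le hγ1 hPhat r (hc2 π1s π2hs) x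
    have := Qpi_le_Qpi_of_Vpi_le hγ0.le hγ1 hPhat r (hNash1h π1s) x
    linarith

theorem stmt17 {S1 S2 A : Type*} [Fintype S1] [Fintype S2] [Fintype A]
    [DecidableEq S1] [DecidableEq S2] [DecidableEq A]
    [Nonempty S1] [Nonempty S2] [Nonempty A]
    (P Phat : (S1 ⊕ S2) → A → (S1 ⊕ S2) → ℝ) (r : (S1 ⊕ S2) → A → ℝ) (γ : ℝ)
    (hP : IsKernel P) (hPhat : IsKernel Phat)
    (hr : ∀ s a, 0 ≤ r s a ∧ r s a ≤ 1) (hγ0 : 0 < γ) (hγ1 : γ < 1)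
    -- a Nash equilibrium `π* = (π1s, π2s)` of the true game `G`
    (π1s : S1 → A) (π2s : S2 → A)
    (hNash1 : ∀ (π1 : S1 → A) (s : S1 ⊕ S2),
        Vpi γ P r (Sum.elim π1 π2s) s ≤ Vpi γ P r (Sum.elim π1s π2s) s)
    (hNash2 : ∀ (π2 : S2 → A) (s : S1 ⊕ S2),
        Vpi γ P r (Sum.elim π1s π2s) s ≤ Vpi γ P r (Sum.elim π1s π2) s)
    -- counter (best-response) policies computed in the empirical game `Ĝ`
    (c1hat : (S2 → A) → (S1 → A)) (c2hat : (S1 → A) → (S2 → A))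
    (hc1 : ∀ (π2 : S2 → A) (π1 : S1 → A) (s : S1 ⊕ S2),
        Vpi γ Phat r (Sum.elim π1 π2) s ≤ Vpi γ Phat r (Sum.elim (c1hat π2) π2) s)
    (hc2 : ∀ (π1 : S1 → A) (π2 : S2 → A) (s : S1 ⊕ S2),
        Vpi γ Phat r (Sum.elim π1 (c2hat π1)) s ≤ Vpi γ Phat r (Sum.elim π1 π2) s)
    -- a Nash equilibrium `π̂* = (π1hs, π2hs)` of `Ĝ`, whose Q-function is `Q̂*`
    (π1hs : S1 → A) (π2hs : S2 → A)
    (hNash1h : ∀ (π1 : S1 → A) (s : S1 ⊕ S2),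
        Vpi γ Phat r (Sum.elim π1 π2hs) s ≤ Vpi γ Phat r (Sum.elim π1hs π2hs) s)
    (hNash2h : ∀ (π2 : S2 → A) (s : S1 ⊕ S2),
        Vpi γ Phat r (Sum.elim π1hs π2hs) s ≤ Vpi γ Phat r (Sum.elim π1hs π2) s)
    -- a policy pair `π̂` with `|Q̂^{π̂} − Q̂*| ≤ ε_PS` componentwise
    (π1h : S1 → A) (π2h : S2 → A) (εPS : ℝ) (hεPS : 0 ≤ εPS)
    (hPS : ∀ x : (S1 ⊕ S2) × A,
        |Qpi γ Phat r (Sum.elim π1h π2h) x - Qpi γ Phat r (Sum.elim π1hs π2hs) x| ≤ εPS)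
    (x : (S1 ⊕ S2) × A) :
    -(‖Qpi γ P r (Sum.elim (c1hat π2s) π2s) - Qpi γ Phat r (Sum.elim (c1hat π2s) π2s)‖ +
        ‖Qpi γ P r (Sum.elim π1h π2h) - Qpi γ Phat r (Sum.elim π1h π2h)‖ + εPS) ≤
      Qpi γ P r (Sum.elim π1s π2s) x - Qpi γ P r (Sum.elim π1h π2h) x ∧
    Qpi γ P r (Sum.elim π1s π2s) x - Qpi γ P r (Sum.elim π1h π2h) x ≤
      ‖Qpi γ P r (Sum.elim π1s (c2hat π1s)) - Qpi γ Phat r (Sum.elim π1s (c2hat π1s))‖ +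
        ‖Qpi γ P r (Sum.elim π1h π2h) - Qpi γ Phat r (Sum.elim π1h π2h)‖ + εPS :=
  stmt17_general P Phat r γ hP hPhat hγ0 hγ1 π1s π2s hNash1 hNash2 c1hat c2hat hc1 hc2 π1hs π2hs
    hNash1h hNash2h π1h π2h εPS hPS x
end

section
/- Let P be a transition kernel on finite S×A (each row a probability distribution on S) satisfying the representative-states assumption with parameter L ≥ 1 and anchor pairs {(s_k,a_k)}_{k∈K}, let r : S×A → [0,1], γ ∈ (0,1), and let P̂_K be any matrix indexed by K×S, with P̂(·|s,a) = Σ_{k∈K} λ_k^{s,a} P̂_K(·|s_k,a_k). Let Q̂_h*, V̂_h* (respectively Q_h*, V_h*) be the H-step value iteration sequences with kernel P̂ (respectively P). Then ‖Q̂_0* − Q_0*‖_∞ ≤ Σ_{h=0}^{H−1} γ^{h+1} · L · max_{k∈K} |Σ_{s'} (P̂_K(s'|s_k,a_k) − P(s'|s_k,a_k)) V̂_{h+1}*(s')|. -/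
/-- The kernel built from anchor rows `PK` by linear combination with coefficients `lam`. -/
noncomputable def kernelOf {S A K : Type*} [Fintype K]
    (lam : S → A → K → ℝ) (PK : K → S → ℝ) : S → A → S → ℝ :=
  fun s a s' => ∑ k, lam s a k * PK k s'

/-- Discounted value iteration with a (possibly signed) kernel `Q`, `t` steps:
`VIter Q r γ 0 = 0`, `VIter Q r γ (t+1) s = max_a (r(s,a) + γ Σ_{s'} Q(s'|s,a) VIter t s')`. -/
noncomputable def VIter {S A : Type*} [Fintype S] [Fintype A]
    (Q : S → A → S → ℝ) (r : S → A → ℝ) (γ : ℝ) : ℕ → S → ℝ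
  | 0 => fun _ => 0
  | t + 1 => fun s => ⨆ a : A, (r s a + γ * ∑ s', Q s a s' * VIter Q r γ t s')

/-- The Q-function at step `h` of `H`-step value iteration with kernel `Q`:
`Q_h*(s,a) = r(s,a) + γ Σ_{s'} Q(s'|s,a) V_{h+1}*(s')` where `V_{h+1}*` is the value after
`H − (h+1)` iterations. -/
noncomputable def QIter {S A : Type*} [Fintype S] [Fintype A]
    (Q : S → A → S → ℝ) (r : S → A → ℝ) (γ : ℝ) (H h : ℕ) : S → A → ℝ :=
  fun s a => r s a + γ * ∑ s', Q s a s' * VIter Q r γ (H - (h + 1)) s'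

/-!
One step of value iteration splits the difference of the two Q-functions as
`γ * (∑ (P̂ - P) V̂ + ∑ P (V̂ - V))`. By the representative-states identity the first sum is a
`λ`-combination of the anchor errors, hence at most `L` times the largest of them; the second is
an average under the stochastic kernel `P`, hence at most `‖V̂ - V‖_∞`, and taking the maximum
over actions is 1-Lipschitz, so that bound is inherited from the previous step. Unrolling the
recursion gives the discounted sum.
-/

open Finset

lemma ciSup_sub_ciSup_le {ι : Type*} [Finite ι] [Nonempty ι] {f g : ι → ℝ} {c : ℝ}
    (h : ∀ i, f i - g i ≤ c) : (⨆ i, f i) - ⨆ i, g i ≤ c := by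
  rw [sub_le_iff_le_add]
  refine ciSup_le fun i => ?_
  linarith [h i, le_ciSup (Finite.bddAbove_range g) i]

lemma abs_ciSup_sub_ciSup_le {ι : Type*} [Finite ι] [Nonempty ι] {f g : ι → ℝ} {c : ℝ}
    (h : ∀ i, |f i - g i| ≤ c) : |(⨆ i, f i) - ⨆ i, g i| ≤ c :=
  abs_sub_le_iff.2 ⟨ciSup_sub_ciSup_le fun i => (abs_sub_le_iff.1 (h i)).1,
    ciSup_sub_ciSup_le fun i => (abs_sub_le_iff.1 (h i)).2⟩

lemma sum_range_succ_discounted (γ c : ℝ) (e : ℕ → ℝ) (t : ℕ) :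
    ∑ h ∈ range (t + 1), γ ^ (h + 1) * c * e (t + 1 - (h + 1)) =
      γ * (c * e t + ∑ h ∈ range t, γ ^ (h + 1) * c * e (t - (h + 1))) := by
  rw [sum_range_succ', mul_add, mul_sum, add_comm]
  congr 1
  · simp [mul_assoc]
  · refine sum_congr rfl fun h _ => ?_
    rw [Nat.add_sub_add_right]
    ring

section ValueIteration

variable {S A K : Type*}

lemma IsKernel.abs_sum_mul_le [Fintype S] {P : S → A → S → ℝ} (hP : IsKernel P) (s : S)
    (a : A) {f : S → ℝ} {B : ℝ} (hf : ∀ s', |f s'| ≤ B) : |∑ s', P s a s' * f s'| ≤ B :=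
  calc |∑ s', P s a s' * f s'|
      ≤ ∑ s', P s a s' * |f s'| := by
        refine (abs_sum_le_sum_abs _ _).trans_eq (sum_congr rfl fun s' _ => ?_)
        rw [abs_mul, abs_of_nonneg (hP.1 s a s')]
    _ ≤ ∑ s', P s a s' * B := by gcongr with s'; exacts [hP.1 s a s', hf s']
    _ = B := by rw [← sum_mul, hP.2 s a, one_mul]

lemma abs_bellman_sub_le [Fintype S] {Q P : S → A → S → ℝ} (hP : IsKernel P) {γ : ℝ}
    (hγ : 0 ≤ γ) (c : ℝ) (s : S) (a : A) {u v : S → ℝ} {B : ℝ} (huv : ∀ s', |u s' - v s'| ≤ B) :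
    |(c + γ * ∑ s', Q s a s' * u s') - (c + γ * ∑ s', P s a s' * v s')| ≤
      γ * (|∑ s', (Q s a s' - P s a s') * u s'| + B) := by
  have split : (c + γ * ∑ s', Q s a s' * u s') - (c + γ * ∑ s', P s a s' * v s') =
      γ * (∑ s', (Q s a s' - P s a s') * u s' + ∑ s', P s a s' * (u s' - v s')) := by
    simp only [sub_mul, mul_sub, sum_sub_distrib]
    ring
  rw [split, abs_mul, abs_of_nonneg hγ]
  gcongr
  exact (abs_add_le _ _).trans (add_le_add_right (hP.abs_sum_mul_le s a huv) _)

noncomputable def anchorGap [Fintype S] [Finite K] (P : S → A → S → ℝ) (anchor : K → S × A)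
    (PK : K → S → ℝ) (v : S → ℝ) : ℝ :=
  ⨆ k, |∑ s', (PK k s' - P (anchor k).1 (anchor k).2 s') * v s'|

lemma anchorGap_nonneg [Fintype S] [Finite K] (P : S → A → S → ℝ) (anchor : K → S × A)
    (PK : K → S → ℝ) (v : S → ℝ) : 0 ≤ anchorGap P anchor PK v :=
  Real.iSup_nonneg fun _ => abs_nonneg _

lemma sum_kernelOf_sub_mul_eq [Fintype S] [Fintype K] {P : S → A → S → ℝ} {anchor : K → S × A}
    {lam : S → A → K → ℝ} {s : S} {a : A}
    (hrep : ∀ s', P s a s' = ∑ k, lam s a k * P (anchor k).1 (anchor k).2 s')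
    (PK : K → S → ℝ) (v : S → ℝ) :
    ∑ s', (kernelOf lam PK s a s' - P s a s') * v s' =
      ∑ k, lam s a k * ∑ s', (PK k s' - P (anchor k).1 (anchor k).2 s') * v s' := by
  simp only [kernelOf, hrep, ← sum_sub_distrib, ← mul_sub, sum_mul, mul_sum, mul_assoc]
  exact sum_comm

lemma abs_sum_kernelOf_sub_mul_le [Fintype S] [Fintype K] {P : S → A → S → ℝ}
    {anchor : K → S × A} {lam : S → A → K → ℝ} {L : ℝ} {s : S} {a : A}
    (hrep : ∀ s', P s a s' = ∑ k, lam s a k * P (anchor k).1 (anchor k).2 s')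
    (hL1 : ∑ k, |lam s a k| ≤ L) (PK : K → S → ℝ) (v : S → ℝ) :
    |∑ s', (kernelOf lam PK s a s' - P s a s') * v s'| ≤ L * anchorGap P anchor PK v := by
  rw [sum_kernelOf_sub_mul_eq hrep]
  calc |∑ k, lam s a k * ∑ s', (PK k s' - P (anchor k).1 (anchor k).2 s') * v s'|
    _ ≤ ∑ k, |lam s a k| * |∑ s', (PK k s' - P (anchor k).1 (anchor k).2 s') * v s'| :=
        (abs_sum_le_sum_abs _ _).trans_eq (by simp only [abs_mul])
    _ ≤ ∑ k, |lam s a k| * anchorGap P anchor PK v := by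
        gcongr with k
        exact le_ciSup (Finite.bddAbove_range
          fun k => |∑ s', (PK k s' - P (anchor k).1 (anchor k).2 s') * v s'|) k
    _ ≤ L * anchorGap P anchor PK v := by
        rw [← sum_mul]
        exact mul_le_mul_of_nonneg_right hL1 (anchorGap_nonneg _ _ _ _)

lemma abs_bellman_kernelOf_sub_le [Fintype S] [Fintype K] {P : S → A → S → ℝ} (hP : IsKernel P)
    {anchor : K → S × A} {lam : S → A → K → ℝ} {L γ : ℝ} (hγ : 0 ≤ γ)
    (hrep : ∀ s a s', P s a s' = ∑ k, lam s a k * P (anchor k).1 (anchor k).2 s')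
    (hL1 : ∀ s a, ∑ k, |lam s a k| ≤ L) (PK : K → S → ℝ) (c : ℝ) (s : S) (a : A)
    {u v : S → ℝ} {B : ℝ} (huv : ∀ s', |u s' - v s'| ≤ B) :
    |(c + γ * ∑ s', kernelOf lam PK s a s' * u s') - (c + γ * ∑ s', P s a s' * v s')| ≤
      γ * (L * anchorGap P anchor PK u + B) :=
  (abs_bellman_sub_le hP hγ c s a huv).trans <| by
    gcongr
    exact abs_sum_kernelOf_sub_mul_le (hrep s a) (hL1 s a) PK u

lemma abs_VIter_kernelOf_sub_le [Fintype S] [Fintype A] [Nonempty A] [Fintype K]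
    {P : S → A → S → ℝ} (hP : IsKernel P) {anchor : K → S × A} {lam : S → A → K → ℝ}
    {L γ : ℝ} (hγ : 0 ≤ γ)
    (hrep : ∀ s a s', P s a s' = ∑ k, lam s a k * P (anchor k).1 (anchor k).2 s')
    (hL1 : ∀ s a, ∑ k, |lam s a k| ≤ L) (PK : K → S → ℝ) (r : S → A → ℝ) (t : ℕ)
    (s : S) :
    |VIter (kernelOf lam PK) r γ t s - VIter P r γ t s| ≤
      ∑ h ∈ range t, γ ^ (h + 1) * L *
        anchorGap P anchor PK (VIter (kernelOf lam PK) r γ (t - (h + 1))) := by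
  induction t generalizing s with
  | zero => simp [VIter]
  | succ t ih =>
    rw [sum_range_succ_discounted γ L fun n => anchorGap P anchor PK (VIter _ r γ n)]
    exact abs_ciSup_sub_ciSup_le fun a =>
      abs_bellman_kernelOf_sub_le hP hγ hrep hL1 PK (r s a) s a ih

lemma abs_QIter_kernelOf_sub_le [Fintype S] [Fintype A] [Nonempty A] [Fintype K]
    {P : S → A → S → ℝ} (hP : IsKernel P) {anchor : K → S × A} {lam : S → A → K → ℝ}
    {L γ : ℝ} (hγ : 0 ≤ γ)
    (hrep : ∀ s a s', P s a s' = ∑ k, lam s a k * P (anchor k).1 (anchor k).2 s')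
    (hL1 : ∀ s a, ∑ k, |lam s a k| ≤ L) (PK : K → S → ℝ) (r : S → A → ℝ) (H : ℕ) (s : S)
    (a : A) :
    |QIter (kernelOf lam PK) r γ H 0 s a - QIter P r γ H 0 s a| ≤
      ∑ h ∈ range H, γ ^ (h + 1) * L *
        anchorGap P anchor PK (VIter (kernelOf lam PK) r γ (H - (h + 1))) := by
  cases H with
  | zero => simp [QIter, VIter]
  | succ t =>
    rw [sum_range_succ_discounted γ L fun n => anchorGap P anchor PK (VIter _ r γ n)]
    exact abs_bellman_kernelOf_sub_le hP hγ hrep hL1 PK (r s a) s a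
      (abs_VIter_kernelOf_sub_le hP hγ hrep hL1 PK r t)

end ValueIteration

theorem stmt18_general {S A K : Type*} [Fintype S] [Fintype A] [Fintype K]
    [Nonempty A]
    (P : S → A → S → ℝ) (r : S → A → ℝ) (γ L : ℝ) (H : ℕ)
    (hP : IsKernel P)
    (hγ0 : 0 < γ) (hL : 1 ≤ L)
    (anchor : K → S × A) (lam : S → A → K → ℝ)
    (hL1 : ∀ s a, ∑ k, |lam s a k| ≤ L)
    (hrep : ∀ s a s', P s a s' = ∑ k, lam s a k * P (anchor k).1 (anchor k).2 s')
    (PhatK : K → S → ℝ) :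
    ‖(fun x : S × A =>
        QIter (kernelOf lam PhatK) r γ H 0 x.1 x.2 - QIter P r γ H 0 x.1 x.2)‖ ≤
      ∑ h ∈ Finset.range H, γ ^ (h + 1) * L *
        (⨆ k : K, |∑ s', (PhatK k s' - P (anchor k).1 (anchor k).2 s') *
            VIter (kernelOf lam PhatK) r γ (H - (h + 1)) s'|) := by
  have hbound_nonneg : 0 ≤ ∑ h ∈ range H, γ ^ (h + 1) * L *
      anchorGap P anchor PhatK (VIter (kernelOf lam PhatK) r γ (H - (h + 1))) :=
    sum_nonneg fun h _ =>
      mul_nonneg (mul_nonneg (pow_nonneg hγ0.le _) (zero_le_one.trans hL))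
        (anchorGap_nonneg _ _ _ _)
  refine (pi_norm_le_iff_of_nonneg hbound_nonneg).2 fun x => ?_
  rw [Real.norm_eq_abs]
  exact abs_QIter_kernelOf_sub_le hP hγ0.le hrep hL1 PhatK r H x.1 x.2

theorem stmt18 {S A K : Type*} [Fintype S] [Fintype A] [Fintype K]
    [Nonempty S] [Nonempty A]
    (P : S → A → S → ℝ) (r : S → A → ℝ) (γ L : ℝ) (H : ℕ)
    (hP : IsKernel P) (hr : ∀ s a, 0 ≤ r s a ∧ r s a ≤ 1)
    (hγ0 : 0 < γ) (hγ1 : γ < 1) (hL : 1 ≤ L)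
    (anchor : K → S × A) (lam : S → A → K → ℝ)
    (hsum : ∀ s a, ∑ k, lam s a k = 1) (hL1 : ∀ s a, ∑ k, |lam s a k| ≤ L)
    (hrep : ∀ s a s', P s a s' = ∑ k, lam s a k * P (anchor k).1 (anchor k).2 s')
    (PhatK : K → S → ℝ) :
    ‖(fun x : S × A =>
        QIter (kernelOf lam PhatK) r γ H 0 x.1 x.2 - QIter P r γ H 0 x.1 x.2)‖ ≤
      ∑ h ∈ Finset.range H, γ ^ (h + 1) * L *
        (⨆ k : K, |∑ s', (PhatK k s' - P (anchor k).1 (anchor k).2 s') *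
            VIter (kernelOf lam PhatK) r γ (H - (h + 1)) s'|) :=
  stmt18_general P r γ L H hP hγ0 hL anchor lam hL1 hrep PhatK
end
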